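/- Let γ = [0; c_1, c_2, ...] and γ' = [0; c'_1, c'_2, ...] be irrational numbers with all partial quotients at most 4. Suppose every block of length 2n+1 occurring infinitely often in (c'_1, c'_2, ...) also occurs infinitely often in (c_1, c_2, ...). Then μ(γ') < μ(γ) + 2·2^{-(n-1)}. -/

import Mathlib

open Filter

/-- Numerators of the convergents of the continued fraction `[a 0; a 1, a 2, ...]`. -/
def cfNum (a : ℕ → ℤ) : ℕ → ℤ
  | 0 => a 0
  | 1 => a 1 * a 0 + 1
  | n + 2 => a (n + 2) * cfNum a (n + 1) + cfNum a n

/-- Denominators of the convergents of the continued fraction `[a 0; a 1, a 2, ...]`. -/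
def cfDen (a : ℕ → ℤ) : ℕ → ℤ
  | 0 => 1
  | 1 => a 1
  | n + 2 => a (n + 2) * cfDen a (n + 1) + cfDen a n

/-- Value of the infinite continued fraction `[a 0; a 1, a 2, ...]`, as the limit of
its convergents. -/
noncomputable def cfVal (a : ℕ → ℤ) : ℝ :=
  limUnder atTop fun n => (cfNum a n : ℝ) / (cfDen a n : ℝ)

/-- Value of the infinite continued fraction `[0; s 0, s 1, s 2, ...]`. -/
noncomputable def cfZero (s : ℕ → ℤ) : ℝ :=
  cfVal fun n => if n = 0 then 0 else s (n - 1)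

/-- Value of the finite continued fraction `[0; l]`. -/
noncomputable def cfFin : List ℤ → ℝ
  | [] => 0
  | x :: xs => 1 / ((x : ℝ) + cfFin xs)

/-- `λ_i(α) = [a_i; a_{i+1}, ...] + [0; a_{i-1}, ..., a_1]` for `α = [a 0; a 1, a 2, ...]`. -/
noncomputable def lambdaCF (a : ℕ → ℤ) (i : ℕ) : ℝ :=
  cfVal (fun n => a (i + n)) + cfFin ((List.range (i - 1)).map fun j => a (i - 1 - j))

/-- `λ_i(B) = [b_i; b_{i-1}, ...] + [0; b_{i+1}, ...]` for a doubly infinite sequence. -/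
noncomputable def lambdaZ (b : ℤ → ℤ) (i : ℤ) : ℝ :=
  cfVal (fun n => b (i - n)) + cfVal fun n => if n = 0 then 0 else b (i + n)

/-- `M(B) = sup_i λ_i(B)`. -/
noncomputable def MZ (b : ℤ → ℤ) : ℝ := ⨆ i : ℤ, lambdaZ b i

/-- The Lagrange constant `μ(α)`, defined by
`μ(α)⁻¹ = liminf_{p ∈ ℤ, q ∈ ℕ} |q (q α - p)|`. -/
noncomputable def lagrangeConst (α : ℝ) : ℝ :=
  (liminf (fun q : ℕ => ⨅ p : ℤ, |(q : ℝ) * ((q : ℝ) * α - (p : ℝ))|) atTop)⁻¹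

/-- `α` is attainable: `|α - p/q| ≤ 1/(μ(α) q²)` has infinitely many integer solutions. -/
def Attainable (α : ℝ) : Prop :=
  {pq : ℤ × ℤ | 0 < pq.2 ∧
    |α - (pq.1 : ℝ) / (pq.2 : ℝ)| ≤ 1 / (lagrangeConst α * (pq.2 : ℝ) ^ 2)}.Infinite

/-- The Lagrange spectrum: the set of values of `μ(α)` over irrational `α`. -/
def LagrangeSpectrum : Set ℝ := {x | ∃ α : ℝ, Irrational α ∧ lagrangeConst α = x}

/-- The doubly infinite sequence `b` is weakly associated with the number whose partial
quotients are `a 1, a 2, ...`: every central pattern `(b_{-i}, ..., b_i)` occurs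
infinitely often in `(a 1, a 2, ...)`. -/
def WeaklyAssoc (b : ℤ → ℤ) (a : ℕ → ℤ) : Prop :=
  ∀ i : ℕ, ∃ᶠ k in atTop, ∀ j : ℕ, j ≤ 2 * i → a (k + 1 + j) = b ((j : ℤ) - (i : ℤ))

/-!
Write `γ = [0; a_1, a_2, ...]` with convergents `p_k / q_k`. Perron's formula
`q_k |q_k γ - p_k| = 1 / λ_{k+1}(γ)`, together with Lagrange's best approximation property of
the convergents, identifies `μ(γ)` with `limsup λ_i(γ)`.

The number `λ_i = [a_i; a_{i+1}, ...] + [0; a_{i-1}, ..., a_1]` is determined up to `2 · 2⁻ⁿ`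
by the window `a_{i-n}, ..., a_{i+n}`: `n` steps of `x ↦ 1 / (b + x)` with `b ≥ 1` map `[0, 1]`
onto an interval of length at most `2⁻ⁿ`. By pigeonhole, every late window of `γ'` recurs
infinitely often in `γ'`, hence by hypothesis occurs arbitrarily late in `γ`. So every late
`λ_i(γ')` is within `2 · 2⁻ⁿ` of arbitrarily late values `λ_j(γ)`, and
`μ(γ') ≤ μ(γ) + 2 · 2⁻ⁿ < μ(γ) + 2 · 2^{-(n-1)}`.
-/

open Topology

noncomputable def cfFinTail : List ℤ → ℝ → ℝ
  | [], x => x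
  | b :: l, x => 1 / ((b : ℝ) + cfFinTail l x)

@[simp] lemma cfFinTail_nil (x : ℝ) : cfFinTail [] x = x := rfl

@[simp] lemma cfFinTail_cons (b : ℤ) (l : List ℤ) (x : ℝ) :
    cfFinTail (b :: l) x = 1 / ((b : ℝ) + cfFinTail l x) := rfl

lemma cfFin_append (l₁ l₂ : List ℤ) : cfFin (l₁ ++ l₂) = cfFinTail l₁ (cfFin l₂) := by
  induction l₁ with
  | nil => rfl
  | cons b l ih => simp [cfFin, ih]

lemma cfFin_eq_cfFinTail (l : List ℤ) : cfFin l = cfFinTail l 0 := by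
  simpa [cfFin] using cfFin_append l []

lemma one_div_add_mem_Icc {b : ℤ} (hb : 1 ≤ b) {x : ℝ} (hx : x ∈ Set.Icc (0 : ℝ) 1) :
    1 / ((b : ℝ) + x) ∈ Set.Icc (0 : ℝ) 1 := by
  have hb' : (1 : ℝ) ≤ b := by exact_mod_cast hb
  constructor
  · have := hx.1; positivity
  · rw [div_le_one (by linarith [hx.1])]; linarith [hx.1]

lemma cfFinTail_mem_Icc {l : List ℤ} (hl : ∀ b ∈ l, 1 ≤ b) {x : ℝ}
    (hx : x ∈ Set.Icc (0 : ℝ) 1) : cfFinTail l x ∈ Set.Icc (0 : ℝ) 1 := by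
  induction l with
  | nil => exact hx
  | cons b l ih =>
    exact one_div_add_mem_Icc (hl b List.mem_cons_self)
      (ih fun b hb ↦ hl b (List.mem_cons_of_mem _ hb))

lemma cfFin_mem_Icc {l : List ℤ} (hl : ∀ b ∈ l, 1 ≤ b) : cfFin l ∈ Set.Icc (0 : ℝ) 1 := by
  rw [cfFin_eq_cfFinTail]
  exact cfFinTail_mem_Icc hl (by simp)

lemma abs_one_div_add_sub_le {b : ℤ} (hb : 1 ≤ b) {x y : ℝ}
    (hx : x ∈ Set.Icc (0 : ℝ) 1) (hy : y ∈ Set.Icc (0 : ℝ) 1) :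
    |1 / ((b : ℝ) + x) - 1 / ((b : ℝ) + y)| ≤ 1 / 2 := by
  have hb' : (1 : ℝ) ≤ b := by exact_mod_cast hb
  obtain ⟨hx0, hx1⟩ := hx
  obtain ⟨hy0, hy1⟩ := hy
  have hbx : 0 < (b : ℝ) + x := by linarith
  have hby : 0 < (b : ℝ) + y := by linarith
  rw [div_sub_div _ _ hbx.ne' hby.ne', abs_div, abs_of_pos (mul_pos hbx hby),
    div_le_iff₀ (mul_pos hbx hby), abs_le]
  constructor <;> nlinarith

lemma abs_cfFinTail_pair_sub_le {b c : ℤ} (hb : 1 ≤ b) (hc : 1 ≤ c) {x y : ℝ}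
    (hx : 0 ≤ x) (hy : 0 ≤ y) :
    |cfFinTail [b, c] x - cfFinTail [b, c] y| ≤ |x - y| / 4 := by
  have hb' : (1 : ℝ) ≤ b := by exact_mod_cast hb
  have hc' : (1 : ℝ) ≤ c := by exact_mod_cast hc
  have hcx : 0 < (c : ℝ) + x := by linarith
  have hcy : 0 < (c : ℝ) + y := by linarith
  have key : cfFinTail [b, c] x - cfFinTail [b, c] y
      = (x - y) / ((b * (c + x) + 1) * (b * (c + y) + 1)) := by
    simp only [cfFinTail_cons, cfFinTail_nil]
    field_simp
    ring
  have h2x : 2 ≤ (b : ℝ) * (c + x) + 1 := by nlinarith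
  have h2y : 2 ≤ (b : ℝ) * (c + y) + 1 := by nlinarith
  have hden : 4 ≤ ((b : ℝ) * (c + x) + 1) * (b * (c + y) + 1) := by nlinarith
  rw [key, abs_div, abs_of_pos (a := ((b : ℝ) * (c + x) + 1) * (b * (c + y) + 1)) (by linarith)]
  exact div_le_div_of_nonneg_left (abs_nonneg _) (by norm_num) hden

lemma abs_cfFinTail_sub_le : ∀ (l : List ℤ), (∀ b ∈ l, 1 ≤ b) → ∀ {x y : ℝ},
    x ∈ Set.Icc (0 : ℝ) 1 → y ∈ Set.Icc (0 : ℝ) 1 →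
    |cfFinTail l x - cfFinTail l y| ≤ (1 / 2 : ℝ) ^ l.length
  | [], _, x, y, hx, hy => by
    simp only [cfFinTail_nil, List.length_nil, pow_zero, abs_le]
    constructor <;> linarith [hx.1, hx.2, hy.1, hy.2]
  | [b], hl, x, y, hx, hy => by
    simpa using abs_one_div_add_sub_le (hl b (by simp)) hx hy
  | b :: c :: l, hl, x, y, hx, hy => by
    have hl' : ∀ d ∈ l, 1 ≤ d := fun d hd ↦ hl d (by simp [hd])
    have ih := abs_cfFinTail_sub_le l hl' hx hy
    have h := abs_cfFinTail_pair_sub_le (hl b (by simp)) (hl c (by simp))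
      (cfFinTail_mem_Icc hl' hx).1 (cfFinTail_mem_Icc hl' hy).1
    calc |cfFinTail (b :: c :: l) x - cfFinTail (b :: c :: l) y|
        ≤ |cfFinTail l x - cfFinTail l y| / 4 := h
      _ ≤ (1 / 2 : ℝ) ^ l.length / 4 := by gcongr
      _ = (1 / 2 : ℝ) ^ (b :: c :: l).length := by simp [pow_succ]; ring

section Convergents

variable {a : ℕ → ℤ}

noncomputable def cfConv (a : ℕ → ℤ) (k : ℕ) : ℝ := (cfNum a k : ℝ) / (cfDen a k : ℝ)

lemma cfNum_add_two (k : ℕ) : cfNum a (k + 2) = a (k + 2) * cfNum a (k + 1) + cfNum a k := rfl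

lemma cfDen_add_two (k : ℕ) : cfDen a (k + 2) = a (k + 2) * cfDen a (k + 1) + cfDen a k := rfl

lemma cfNum_succ_mul_cfDen_sub (a : ℕ → ℤ) :
    ∀ k, cfNum a (k + 1) * cfDen a k - cfNum a k * cfDen a (k + 1) = (-1) ^ k
  | 0 => by simp [cfNum, cfDen]; ring
  | k + 1 => by
    rw [cfNum_add_two, cfDen_add_two, pow_succ]
    linear_combination (-1 : ℤ) * cfNum_succ_mul_cfDen_sub a k

lemma one_le_cfDen (ha : ∀ k, 1 ≤ a (k + 1)) : ∀ k, 1 ≤ cfDen a k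
  | 0 => le_rfl
  | 1 => ha 0
  | k + 2 => by
    rw [cfDen_add_two]
    nlinarith [one_le_cfDen ha k, one_le_cfDen ha (k + 1), ha (k + 1)]

lemma cfDen_pos (ha : ∀ k, 1 ≤ a (k + 1)) (k : ℕ) : (0 : ℝ) < cfDen a k := by
  exact_mod_cast one_le_cfDen ha k

lemma cfDen_mono (ha : ∀ k, 1 ≤ a (k + 1)) : Monotone (cfDen a) := by
  refine monotone_nat_of_le_succ fun k ↦ ?_
  cases k with
  | zero => exact ha 0
  | succ k =>
    rw [cfDen_add_two]
    nlinarith [one_le_cfDen ha k, one_le_cfDen ha (k + 1), ha (k + 1)]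

lemma natCast_le_cfDen (ha : ∀ k, 1 ≤ a (k + 1)) : ∀ k : ℕ, (k : ℤ) ≤ cfDen a k
  | 0 => zero_le_one
  | 1 => ha 0
  | k + 2 => by
    have ih := natCast_le_cfDen ha (k + 1)
    push_cast at ih ⊢
    rw [cfDen_add_two]
    nlinarith [one_le_cfDen ha k, ha (k + 1)]

lemma cfConv_succ_sub (ha : ∀ k, 1 ≤ a (k + 1)) (k : ℕ) :
    cfConv a (k + 1) - cfConv a k = (-1) ^ k * (1 / ((cfDen a k : ℝ) * cfDen a (k + 1))) := by
  have h0 := cfDen_pos ha k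
  have h1 := cfDen_pos ha (k + 1)
  have hdet : (cfNum a (k + 1) : ℝ) * cfDen a k - cfNum a k * cfDen a (k + 1) = (-1) ^ k := by
    exact_mod_cast cfNum_succ_mul_cfDen_sub a k
  rw [cfConv, cfConv, div_sub_div _ _ h1.ne' h0.ne', ← hdet]
  field_simp

/-- The convergents are `a 0` plus the partial sums of an alternating series whose terms
`1 / (q_k q_{k+1})` decrease to `0`. -/
lemma exists_tendsto_cfConv (ha : ∀ k, 1 ≤ a (k + 1)) :
    ∃ l ∈ Set.Icc (0 : ℝ) 1, Tendsto (cfConv a) atTop (𝓝 (a 0 + l)) := by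
  set g : ℕ → ℝ := fun k ↦ 1 / ((cfDen a k : ℝ) * cfDen a (k + 1)) with hg
  have hg_anti : Antitone g := by
    refine antitone_nat_of_succ_le fun k ↦ ?_
    have h0 := cfDen_pos ha k
    have h1 := cfDen_pos ha (k + 1)
    have hmono : (cfDen a k : ℝ) ≤ cfDen a (k + 2) := by exact_mod_cast cfDen_mono ha (by omega)
    apply one_div_le_one_div_of_le (mul_pos h0 h1)
    rw [mul_comm]
    gcongr
  have hg_lim : Tendsto g atTop (𝓝 0) := by
    refine squeeze_zero (fun k ↦ one_div_nonneg.mpr (mul_pos (cfDen_pos ha k) (cfDen_pos ha _)).le)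
      (fun k ↦ ?_)
      tendsto_one_div_add_atTop_nhds_zero_nat
    have h0 : (1 : ℝ) ≤ cfDen a k := by exact_mod_cast one_le_cfDen ha k
    have h1 : (k : ℝ) + 1 ≤ cfDen a (k + 1) := by exact_mod_cast natCast_le_cfDen ha (k + 1)
    exact one_div_le_one_div_of_le (by positivity) (by nlinarith)
  obtain ⟨l, hl⟩ := hg_anti.tendsto_alternating_series_of_tendsto_zero hg_lim
  have hconv : cfConv a = fun k ↦ (a 0 : ℝ) + ∑ i ∈ Finset.range k, (-1) ^ i * g i := by
    funext k
    rw [← Finset.sum_congr rfl fun i _ ↦ cfConv_succ_sub ha i, Finset.sum_range_sub]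
    simp [cfConv, cfNum, cfDen]
  refine ⟨l, ⟨?_, ?_⟩, hconv ▸ tendsto_const_nhds.add hl⟩
  · simpa using hg_anti.alternating_series_le_tendsto hl 0
  · have h := hg_anti.tendsto_le_alternating_series hl 0
    have ha1 : (1 : ℝ) ≤ a 1 := by exact_mod_cast ha 0
    simp only [mul_zero, zero_add, Finset.sum_range_one, pow_zero, one_mul, hg] at h
    refine h.trans ?_
    simpa [cfDen] using inv_le_one_of_one_le₀ ha1

lemma tendsto_cfConv (ha : ∀ k, 1 ≤ a (k + 1)) : Tendsto (cfConv a) atTop (𝓝 (cfVal a)) :=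
  tendsto_nhds_limUnder <| let ⟨_, _, h⟩ := exists_tendsto_cfConv ha; ⟨_, h⟩

lemma cfVal_mem_Icc (ha : ∀ k, 1 ≤ a (k + 1)) : cfVal a ∈ Set.Icc (a 0 : ℝ) (a 0 + 1) := by
  obtain ⟨l, hl, h⟩ := exists_tendsto_cfConv ha
  rw [cfVal, show (fun n ↦ (cfNum a n : ℝ) / cfDen a n) = cfConv a from rfl, h.limUnder_eq]
  constructor <;> linarith [hl.1, hl.2]

lemma cfNum_succ_eq (a : ℕ → ℤ) : ∀ m,
    cfNum a (m + 1) = a 0 * cfNum (fun j ↦ a (j + 1)) m + cfDen (fun j ↦ a (j + 1)) m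
  | 0 => by simp [cfNum, cfDen]; ring
  | 1 => by simp [cfNum, cfDen]; ring
  | m + 2 => by
    rw [cfNum_add_two (a := a) (m + 1), cfNum_add_two (a := fun j ↦ a (j + 1)) m,
      cfDen_add_two (a := fun j ↦ a (j + 1)) m, cfNum_succ_eq a (m + 1), cfNum_succ_eq a m]
    ring

lemma cfDen_succ_eq (a : ℕ → ℤ) : ∀ m, cfDen a (m + 1) = cfNum (fun j ↦ a (j + 1)) m
  | 0 => rfl
  | 1 => by simp [cfNum, cfDen]
  | m + 2 => by
    rw [cfDen_add_two, cfNum_add_two, cfDen_succ_eq a (m + 1), cfDen_succ_eq a m]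

lemma cfVal_eq_add_one_div (ha : ∀ k, 1 ≤ a (k + 1)) :
    cfVal a = a 0 + 1 / cfVal (fun j ↦ a (j + 1)) := by
  have hs : ∀ k, 1 ≤ a (k + 1 + 1) := fun k ↦ ha (k + 1)
  have hs_pos : 0 < cfVal fun j ↦ a (j + 1) :=
    lt_of_lt_of_le (by exact_mod_cast (zero_lt_one.trans_le (ha 0))) (cfVal_mem_Icc hs).1
  have key : ∀ m, cfConv a (m + 1) = a 0 + 1 / cfConv (fun j ↦ a (j + 1)) m := by
    intro m
    have hp : (0 : ℝ) < cfNum (fun j ↦ a (j + 1)) m := by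
      rw [← cfDen_succ_eq]; exact cfDen_pos ha (m + 1)
    have hq := cfDen_pos (a := fun j ↦ a (j + 1)) hs m
    rw [cfConv, cfConv, cfNum_succ_eq, cfDen_succ_eq]
    push_cast
    field_simp
  have h := (tendsto_cfConv ha).comp (tendsto_add_atTop_nat 1)
  refine tendsto_nhds_unique h ?_
  simp only [Function.comp_def, key]
  exact tendsto_const_nhds.add (tendsto_const_nhds.div (tendsto_cfConv hs) hs_pos.ne')

end Convergents

section Tails

variable {a : ℕ → ℤ}

noncomputable def cfTail (a : ℕ → ℤ) (i : ℕ) : ℝ := cfVal fun n ↦ a (i + n)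

lemma cfTail_mem_Icc (ha : ∀ k, 1 ≤ a (k + 1)) (i : ℕ) :
    cfTail a i ∈ Set.Icc (a i : ℝ) (a i + 1) := by
  simpa [cfTail] using cfVal_mem_Icc (a := fun n ↦ a (i + n)) fun k ↦ ha (i + k)

lemma one_le_cfTail (ha : ∀ k, 1 ≤ a (k + 1)) {i : ℕ} (hi : 1 ≤ i) : 1 ≤ cfTail a i := by
  obtain ⟨j, rfl⟩ : ∃ j, i = j + 1 := ⟨i - 1, by omega⟩
  exact le_trans (by exact_mod_cast ha j) (cfTail_mem_Icc ha (j + 1)).1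

lemma cfTail_eq_add_one_div (ha : ∀ k, 1 ≤ a (k + 1)) (i : ℕ) :
    cfTail a i = a i + 1 / cfTail a (i + 1) := by
  have h := cfVal_eq_add_one_div (a := fun n ↦ a (i + n)) fun k ↦ ha (i + k)
  have hshift : (fun j ↦ a (i + (j + 1))) = fun n ↦ a (i + 1 + n) := by
    funext j; rw [Nat.add_right_comm, Nat.add_assoc]
  simpa [cfTail, hshift] using h

lemma one_div_cfTail_eq_cfFinTail (ha : ∀ k, 1 ≤ a (k + 1)) (n : ℕ) : ∀ i,
    1 / cfTail a i = cfFinTail ((List.range n).map fun j ↦ a (i + j)) (1 / cfTail a (i + n)) := by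
  induction n with
  | zero => simp
  | succ n ih =>
    intro i
    rw [List.range_succ_eq_map, List.map_cons, List.map_map, cfFinTail_cons,
      cfTail_eq_add_one_div ha i, ih (i + 1)]
    congr 4
    · funext j; simp only [Function.comp_apply, Nat.succ_eq_add_one]; congr 1; omega
    · rw [Nat.add_right_comm, Nat.add_assoc]

lemma cfVal_eq_cfTail (ha : ∀ k, 1 ≤ a (k + 1)) (k : ℕ) :
    cfVal a = (cfNum a (k + 1) * cfTail a (k + 2) + cfNum a k)
      / (cfDen a (k + 1) * cfTail a (k + 2) + cfDen a k) := by
  have hT : ∀ i, 1 ≤ i → 0 < cfTail a i := fun i hi ↦ zero_lt_one.trans_le (one_le_cfTail ha hi)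
  induction k with
  | zero =>
    have h0 : cfVal a = cfTail a 0 := by simp [cfTail]
    have h2 := hT 2 (by norm_num)
    have ha1 : (1 : ℝ) ≤ a 1 := by exact_mod_cast ha 0
    rw [h0, cfTail_eq_add_one_div ha 0, cfTail_eq_add_one_div ha 1]
    simp only [cfNum, cfDen]
    push_cast
    field_simp
    ring
  | succ k ih =>
    have h3 := hT (k + 3) (by omega)
    have hq0 := cfDen_pos ha k
    have hq1 := cfDen_pos ha (k + 1)
    have hak : (1 : ℝ) ≤ a (k + 2) := by exact_mod_cast ha (k + 1)
    rw [ih, cfTail_eq_add_one_div ha (k + 2), cfNum_add_two, cfDen_add_two]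
    push_cast
    have hd : 0 < (cfDen a (k + 1) : ℝ) * (a (k + 2) + 1 / cfTail a (k + 2 + 1)) + cfDen a k := by
      positivity
    have hd' : 0 < ((a (k + 2) : ℝ) * cfDen a (k + 1) + cfDen a k) * cfTail a (k + 2 + 1)
        + cfDen a (k + 1) := by positivity
    field_simp
    ring

lemma cfDen_mul_sub_cfNum (ha : ∀ k, 1 ≤ a (k + 1)) (k : ℕ) :
    cfDen a (k + 1) * cfVal a - cfNum a (k + 1)
      = (-1) ^ (k + 1) / (cfDen a (k + 1) * cfTail a (k + 2) + cfDen a k) := by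
  have hT := one_le_cfTail ha (i := k + 2) (by omega)
  have hq0 := cfDen_pos ha k
  have hq1 := cfDen_pos ha (k + 1)
  have hdet : (cfNum a (k + 1) : ℝ) * cfDen a k - cfNum a k * cfDen a (k + 1) = (-1) ^ k := by
    exact_mod_cast cfNum_succ_mul_cfDen_sub a k
  have hd : 0 < (cfDen a (k + 1) : ℝ) * cfTail a (k + 2) + cfDen a k := by positivity
  rw [eq_div_iff hd.ne', cfVal_eq_cfTail ha k, pow_succ]
  field_simp
  linear_combination (-1 : ℝ) * hdet

lemma cfDen_div_cfDen_succ (ha : ∀ k, 1 ≤ a (k + 1)) : ∀ k,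
    (cfDen a k : ℝ) / cfDen a (k + 1) = cfFin ((List.range (k + 1)).map fun j ↦ a (k + 1 - j))
  | 0 => by simp [cfDen, cfFin]
  | k + 1 => by
    have hq0 := cfDen_pos ha k
    have hq1 := cfDen_pos ha (k + 1)
    have hak : (1 : ℝ) ≤ a (k + 2) := by exact_mod_cast ha (k + 1)
    rw [List.range_succ_eq_map, List.map_cons, List.map_map, cfFin]
    have hrest : (fun j ↦ a (k + 1 + 1 - j)) ∘ Nat.succ = fun j ↦ a (k + 1 - j) := by
      funext j; simp only [Function.comp_apply]; congr 1; omega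
    rw [hrest, ← cfDen_div_cfDen_succ ha k, cfDen_add_two]
    push_cast
    field_simp

lemma lambdaCF_eq_cfTail_add (a : ℕ → ℤ) (j : ℕ) :
    lambdaCF a (j + 1) = cfTail a (j + 1) + cfFin ((List.range j).map fun m ↦ a (j - m)) :=
  rfl

lemma cfDen_mul_abs_sub_eq (ha : ∀ k, 1 ≤ a (k + 1)) (k : ℕ) :
    cfDen a (k + 1) * |cfDen a (k + 1) * cfVal a - cfNum a (k + 1)| = (lambdaCF a (k + 2))⁻¹ := by
  have hT := one_le_cfTail ha (i := k + 2) (by omega)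
  have hq0 := cfDen_pos ha k
  have hq1 := cfDen_pos ha (k + 1)
  rw [cfDen_mul_sub_cfNum ha, lambdaCF_eq_cfTail_add, ← cfDen_div_cfDen_succ ha, abs_div, abs_pow,
    abs_neg, abs_one, one_pow, abs_of_pos (by positivity)]
  field_simp

lemma one_le_of_mem_map_range (ha : ∀ k, 1 ≤ a (k + 1)) {f : ℕ → ℕ} {m : ℕ}
    (hf : ∀ j < m, 1 ≤ f j) : ∀ b ∈ (List.range m).map fun j ↦ a (f j), 1 ≤ b := by
  intro b hb
  obtain ⟨j, hj, rfl⟩ := List.mem_map.mp hb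
  have h := ha (f j - 1)
  rwa [Nat.sub_add_cancel (hf j (List.mem_range.mp hj))] at h

lemma one_le_lambdaCF (ha : ∀ k, 1 ≤ a (k + 1)) {i : ℕ} (hi : 1 ≤ i) : 1 ≤ lambdaCF a i := by
  obtain ⟨j, rfl⟩ : ∃ j, i = j + 1 := ⟨i - 1, by omega⟩
  have hfin := cfFin_mem_Icc (one_le_of_mem_map_range ha (f := fun m ↦ j - m) (m := j)
    fun m hm ↦ by omega)
  rw [lambdaCF_eq_cfTail_add]
  linarith [hfin.1, one_le_cfTail ha (i := j + 1) (by omega)]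

lemma lambdaCF_le (ha : ∀ k, 1 ≤ a (k + 1)) {B : ℤ} (haB : ∀ k, a (k + 1) ≤ B) {i : ℕ}
    (hi : 1 ≤ i) : lambdaCF a i ≤ B + 2 := by
  obtain ⟨j, rfl⟩ : ∃ j, i = j + 1 := ⟨i - 1, by omega⟩
  have hfin := cfFin_mem_Icc (one_le_of_mem_map_range ha (f := fun m ↦ j - m) (m := j)
    fun m hm ↦ by omega)
  have hB : (a (j + 1) : ℝ) ≤ B := by exact_mod_cast haB j
  rw [lambdaCF_eq_cfTail_add]
  linarith [hfin.2, (cfTail_mem_Icc ha (j + 1)).2]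

end Tails

section Window

variable {a : ℕ → ℤ}

lemma one_div_cfTail_mem_Icc (ha : ∀ k, 1 ≤ a (k + 1)) {i : ℕ} (hi : 1 ≤ i) :
    1 / cfTail a i ∈ Set.Icc (0 : ℝ) 1 := by
  have hT := one_le_cfTail ha hi
  exact ⟨by positivity, by rw [div_le_one (by linarith)]; exact hT⟩

lemma lambdaCF_eq_window (ha : ∀ k, 1 ≤ a (k + 1)) (t n : ℕ) :
    lambdaCF a (t + n + 1) = a (t + n + 1)
      + cfFinTail ((List.range n).map fun j ↦ a (t + n + 2 + j)) (1 / cfTail a (t + n + 2 + n))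
      + cfFinTail ((List.range n).map fun j ↦ a (t + n - j))
          (cfFin ((List.range t).map fun j ↦ a (t - j))) := by
  have hlam : lambdaCF a (t + n + 1)
      = cfTail a (t + n + 1) + cfFin ((List.range (n + t)).map fun j ↦ a (t + n - j)) := by
    rw [Nat.add_comm n t]; rfl
  have hbwd : (fun j ↦ a (t + n - j)) ∘ (fun j ↦ n + j) = fun j ↦ a (t - j) := by
    funext j; simp only [Function.comp_apply]; congr 1; omega
  rw [hlam, cfTail_eq_add_one_div ha, one_div_cfTail_eq_cfFinTail ha n (t + n + 1 + 1),
    List.range_add, List.map_append, cfFin_append, List.map_map, hbwd]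

theorem abs_lambdaCF_sub_le {a' : ℕ → ℤ} (ha : ∀ k, 1 ≤ a (k + 1)) (ha' : ∀ k, 1 ≤ a' (k + 1))
    {n t t' : ℕ} (hwin : ∀ j ≤ 2 * n, a' (t' + 1 + j) = a (t + 1 + j)) :
    |lambdaCF a' (t' + n + 1) - lambdaCF a (t + n + 1)| ≤ 2 * (1 / 2) ^ n := by
  have hwin' : ∀ j ≤ 2 * n, ∀ i i', i = t + 1 + j → i' = t' + 1 + j → a' i' = a i := by
    rintro j hj i i' rfl rfl; exact hwin j hj
  have hmid : a' (t' + n + 1) = a (t + n + 1) := hwin' n (by omega) _ _ (by omega) (by omega)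
  have hfwd : ((List.range n).map fun j ↦ a' (t' + n + 2 + j))
      = (List.range n).map fun j ↦ a (t + n + 2 + j) :=
    List.map_congr_left fun j hj ↦ by
      have := List.mem_range.mp hj
      exact hwin' (n + 1 + j) (by omega) _ _ (by omega) (by omega)
  have hbwd : ((List.range n).map fun j ↦ a' (t' + n - j))
      = (List.range n).map fun j ↦ a (t + n - j) :=
    List.map_congr_left fun j hj ↦ by
      have := List.mem_range.mp hj
      exact hwin' (n - 1 - j) (by omega) _ _ (by omega) (by omega)
  rw [lambdaCF_eq_window ha', lambdaCF_eq_window ha, hmid, hfwd, hbwd]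
  have hF := abs_cfFinTail_sub_le _
    (one_le_of_mem_map_range ha (f := fun j ↦ t + n + 2 + j) (m := n) fun j _ ↦ by omega)
    (one_div_cfTail_mem_Icc ha' (i := t' + n + 2 + n) (by omega))
    (one_div_cfTail_mem_Icc ha (i := t + n + 2 + n) (by omega))
  have hB := abs_cfFinTail_sub_le _
    (one_le_of_mem_map_range ha (f := fun j ↦ t + n - j) (m := n) fun j _ ↦ by omega)
    (cfFin_mem_Icc (one_le_of_mem_map_range ha' (f := fun j ↦ t' - j) (m := t') fun j _ ↦ by omega))
    (cfFin_mem_Icc (one_le_of_mem_map_range ha (f := fun j ↦ t - j) (m := t) fun j _ ↦ by omega))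
  simp only [List.length_map, List.length_range, abs_le] at hF hB
  rw [abs_le]
  constructor <;> linarith [hF.1, hF.2, hB.1, hB.2]

end Window

section BestApproximation

variable {a : ℕ → ℤ}

lemma abs_le_abs_add_of_mul_nonneg {u v : ℝ} (h : 0 ≤ u * v) : |u| ≤ |u + v| := by
  rw [(abs_add_eq_add_abs_iff u v).mpr (mul_nonneg_iff.mp h)]
  linarith [abs_nonneg v]

lemma cfDen_mul_sub_cfNum_mul_succ_nonpos (ha : ∀ k, 1 ≤ a (k + 1)) (k : ℕ) :
    (cfDen a (k + 1) * cfVal a - cfNum a (k + 1)) * (cfDen a (k + 2) * cfVal a - cfNum a (k + 2))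
      ≤ 0 := by
  have hT := one_le_cfTail ha (i := k + 2) (by omega)
  have hT' := one_le_cfTail ha (i := k + 3) (by omega)
  have hq0 := cfDen_pos ha k
  have hq1 := cfDen_pos ha (k + 1)
  have hq2 := cfDen_pos ha (k + 2)
  rw [cfDen_mul_sub_cfNum ha k, cfDen_mul_sub_cfNum ha (k + 1), div_mul_div_comm, ← pow_add,
    show k + 1 + (k + 1 + 1) = 2 * (k + 1) + 1 by ring, pow_succ, pow_mul]
  norm_num
  exact div_nonpos_of_nonpos_of_nonneg (by norm_num) (by positivity)

theorem abs_cfDen_mul_sub_le (ha : ∀ k, 1 ≤ a (k + 1)) (k : ℕ) {p q : ℤ} (hq : 0 < q)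
    (hqk : q < cfDen a (k + 2)) :
    |cfDen a (k + 1) * cfVal a - cfNum a (k + 1)| ≤ |q * cfVal a - p| := by
  set s : ℤ := (-1) ^ (k + 1)
  have hs : s * s = 1 := by simp [s, ← mul_pow]
  have hdet : cfNum a (k + 2) * cfDen a (k + 1) - cfNum a (k + 1) * cfDen a (k + 2) = s :=
    cfNum_succ_mul_cfDen_sub a (k + 1)
  -- the coordinates of `(p, q)` in the unimodular basis `(p_{k+1}, q_{k+1})`, `(p_{k+2}, q_{k+2})`
  set x := s * (q * cfNum a (k + 2) - p * cfDen a (k + 2))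
  set y := s * (p * cfDen a (k + 1) - q * cfNum a (k + 1))
  have hq_eq : x * cfDen a (k + 1) + y * cfDen a (k + 2) = q := by
    linear_combination (s * q) * hdet + q * hs
  have hp_eq : x * cfNum a (k + 1) + y * cfNum a (k + 2) = p := by
    linear_combination (s * p) * hdet + p * hs
  have hq1 := one_le_cfDen ha (k + 1)
  have hx : x ≠ 0 := by
    rintro hx
    rw [hx, zero_mul, zero_add] at hq_eq
    rcases le_or_gt y 0 with hy | hy <;> nlinarith
  have hxy : x * y ≤ 0 := by
    by_contra! hxy
    rcases pos_and_pos_or_neg_and_neg_of_mul_pos hxy with ⟨hx, hy⟩ | ⟨hx, hy⟩ <;> nlinarith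
  have hrel : (q : ℝ) * cfVal a - p
      = x * (cfDen a (k + 1) * cfVal a - cfNum a (k + 1))
        + y * (cfDen a (k + 2) * cfVal a - cfNum a (k + 2)) := by
    rw [← hq_eq, ← hp_eq]
    push_cast
    ring
  have hsign := cfDen_mul_sub_cfNum_mul_succ_nonpos ha k
  set e₁ := (cfDen a (k + 1) : ℝ) * cfVal a - cfNum a (k + 1)
  set e₂ := (cfDen a (k + 2) : ℝ) * cfVal a - cfNum a (k + 2)
  have hxy' : (x : ℝ) * y ≤ 0 := by exact_mod_cast hxy
  calc |e₁| ≤ |(x : ℝ)| * |e₁| :=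
        le_mul_of_one_le_left (abs_nonneg _) (by exact_mod_cast Int.one_le_abs hx)
    _ = |x * e₁| := (abs_mul _ _).symm
    _ ≤ |x * e₁ + y * e₂| := abs_le_abs_add_of_mul_nonneg <| by
        rw [show (x : ℝ) * e₁ * (y * e₂) = (x * y) * (e₁ * e₂) by ring]
        exact mul_nonneg_of_nonpos_of_nonpos hxy' hsign
    _ = |q * cfVal a - p| := by rw [hrel]

lemma exists_cfDen_le_lt (ha : ∀ k, 1 ≤ a (k + 1)) (N : ℕ) {q : ℤ} (hq : cfDen a (N + 1) ≤ q) :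
    ∃ k ≥ N, cfDen a (k + 1) ≤ q ∧ q < cfDen a (k + 2) := by
  classical
  have hex : ∃ j, q < cfDen a (j + 1) :=
    ⟨q.toNat, by have := natCast_le_cfDen ha (q.toNat + 1); push_cast at this; omega⟩
  have hj := Nat.find_spec hex
  have hNj : N + 1 ≤ Nat.find hex := by
    by_contra! h
    have := cfDen_mono ha (show Nat.find hex + 1 ≤ N + 1 by omega)
    omega
  refine ⟨Nat.find hex - 1, by omega, not_lt.mp (Nat.find_min hex (by omega)), ?_⟩
  rwa [show Nat.find hex - 1 + 2 = Nat.find hex + 1 by omega]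

end BestApproximation

lemma liminf_le_liminf_of_forall_exists {u v : ℕ → ℝ} (hu : IsBoundedUnder (· ≥ ·) atTop u)
    (hv : IsCoboundedUnder (· ≥ ·) atTop v) (h : ∀ N, ∀ᶠ m in atTop, ∃ n ≥ N, u n ≤ v m) :
    liminf u atTop ≤ liminf v atTop := by
  refine le_of_forall_lt_imp_le_of_dense fun b hb ↦ ?_
  obtain ⟨N, hN⟩ := eventually_atTop.mp (eventually_lt_of_lt_liminf hb hu)
  exact le_liminf_of_le hv <| (h N).mono fun m ⟨n, hn, hle⟩ ↦ (hN n hn).le.trans hle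

lemma limsup_le_limsup_add_of_eventually_frequently {u v : ℕ → ℝ} {δ : ℝ}
    (hu : IsBoundedUnder (· ≤ ·) atTop u) (hv : IsCoboundedUnder (· ≤ ·) atTop v)
    (h : ∀ᶠ m in atTop, ∃ᶠ n in atTop, v m ≤ u n + δ) :
    limsup v atTop ≤ limsup u atTop + δ := by
  refine le_of_forall_pos_le_add fun η hη ↦ ?_
  have hlt := eventually_lt_of_limsup_lt (lt_add_of_pos_right (limsup u atTop) hη) hu
  refine limsup_le_of_le hv (h.mono fun m hm ↦ ?_)
  obtain ⟨n, hn, hle⟩ := (hm.and_eventually hlt).exists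
  linarith

lemma liminf_inv_eq_inv_limsup {u : ℕ → ℝ} {c : ℝ} (hc : 0 < c) (hcu : ∀ n, c ≤ u n)
    (hu : IsBoundedUnder (· ≤ ·) atTop u) :
    liminf (fun n ↦ (u n)⁻¹) atTop = (limsup u atTop)⁻¹ := by
  -- `x ↦ (max x c)⁻¹` is a continuous antitone function agreeing with `x ↦ x⁻¹` on `[c, ∞)`
  set f : ℝ → ℝ := fun x ↦ (max x c)⁻¹
  have hf : Antitone f := fun x y hxy ↦
    inv_anti₀ (lt_max_of_lt_right hc) (max_le_max_right c hxy)
  have hf_cont : Continuous f :=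
    (continuous_id.max continuous_const).inv₀ fun x ↦ (lt_max_of_lt_right hc).ne'
  have hL : c ≤ limsup u atTop := le_limsup_of_frequently_le (Frequently.of_forall hcu) hu
  have h := hf.map_limsup_of_continuousAt u hf_cont.continuousAt hu
    (isCoboundedUnder_le_of_le atTop hcu)
  simp only [f, max_eq_left hL] at h
  rw [h]
  congr 1
  funext n
  simp [max_eq_left (hcu n)]

lemma eventually_frequently_block_eq {α : Type*} {c : ℕ → α} (hc : (Set.range c).Finite)
    (L : ℕ) : ∀ᶠ k in atTop, ∃ᶠ m in atTop, ∀ j < L, c (m + j) = c (k + j) := by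
  set B : ℕ → Fin L → α := fun k j ↦ c (k + j)
  have hB : (Set.range B).Finite :=
    (Set.Finite.pi fun _ ↦ hc).subset (by rintro _ ⟨k, rfl⟩ j -; exact ⟨_, rfl⟩)
  have hbad : (B ⁻¹' ({w | (B ⁻¹' {w}).Finite} ∩ Set.range B)).Finite :=
    (hB.subset Set.inter_subset_right).preimage' fun w hw ↦ hw.1
  rw [← Nat.cofinite_eq_atTop, eventually_cofinite]
  refine hbad.subset fun k hk ↦ ⟨?_, k, rfl⟩
  rw [Set.mem_ofPred_eq, frequently_cofinite_iff_infinite, Set.not_infinite] at hk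
  show (B ⁻¹' {B k}).Finite
  convert hk using 1
  ext m
  simp [B, funext_iff, Fin.forall_iff]

section LagrangeConstant

variable {a : ℕ → ℤ}

/-- `q ‖q α‖`, where `‖·‖` is the distance to the nearest integer. -/
noncomputable def scaledDist (α : ℝ) (q : ℕ) : ℝ := ⨅ p : ℤ, |(q : ℝ) * ((q : ℝ) * α - (p : ℝ))|

lemma lagrangeConst_eq_inv_liminf (α : ℝ) :
    lagrangeConst α = (liminf (scaledDist α) atTop)⁻¹ :=
  rfl

lemma scaledDist_nonneg (α : ℝ) (q : ℕ) : 0 ≤ scaledDist α q :=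
  le_ciInf fun _ ↦ abs_nonneg _

lemma scaledDist_cfDen_le (ha : ∀ k, 1 ≤ a (k + 1)) (k : ℕ) :
    scaledDist (cfVal a) (cfDen a (k + 1)).toNat ≤ (lambdaCF a (k + 2))⁻¹ := by
  have hcast : (((cfDen a (k + 1)).toNat : ℕ) : ℝ) = cfDen a (k + 1) := by
    exact_mod_cast Int.toNat_of_nonneg (zero_le_one.trans (one_le_cfDen ha (k + 1)))
  refine (ciInf_le ⟨0, ?_⟩ (cfNum a (k + 1))).trans_eq ?_
  · rintro _ ⟨p, rfl⟩; exact abs_nonneg _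
  · rw [hcast, abs_mul, abs_of_pos (cfDen_pos ha _), cfDen_mul_abs_sub_eq ha k]

lemma inv_lambdaCF_le_scaledDist (ha : ∀ k, 1 ≤ a (k + 1)) {k q : ℕ}
    (hkq : cfDen a (k + 1) ≤ q) (hqk : q < cfDen a (k + 2)) :
    (lambdaCF a (k + 2))⁻¹ ≤ scaledDist (cfVal a) q := by
  refine le_ciInf fun p ↦ ?_
  have hq : (0 : ℤ) < q := (one_le_cfDen ha (k + 1)).trans_lt' (by omega) |>.trans_le hkq
  have h := abs_cfDen_mul_sub_le ha k (p := p) hq hqk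
  push_cast at h
  rw [← cfDen_mul_abs_sub_eq ha k, abs_mul, abs_of_nonneg (a := (q : ℝ)) (Nat.cast_nonneg q)]
  exact mul_le_mul (by exact_mod_cast hkq) h (abs_nonneg _) (Nat.cast_nonneg _)

theorem lagrangeConst_cfVal (ha : ∀ k, 1 ≤ a (k + 1)) {B : ℤ} (haB : ∀ k, a (k + 1) ≤ B) :
    lagrangeConst (cfVal a) = limsup (lambdaCF a) atTop := by
  set f := scaledDist (cfVal a)
  set D : ℕ → ℝ := fun k ↦ (lambdaCF a (k + 2))⁻¹
  have hlam : ∀ k, 1 ≤ lambdaCF a (k + 2) := fun k ↦ one_le_lambdaCF ha (by omega)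
  have hlam' : ∀ k, lambdaCF a (k + 2) ≤ B + 2 := fun k ↦ lambdaCF_le ha haB (by omega)
  have hD_le : ∀ k, D k ≤ 1 := fun k ↦ inv_le_one_of_one_le₀ (hlam k)
  have hfD : ∀ N, ∀ᶠ k in atTop, ∃ q ≥ N, f q ≤ D k := fun N ↦
    eventually_atTop.mpr ⟨N, fun k hk ↦ ⟨_, by have := natCast_le_cfDen ha (k + 1); omega,
      scaledDist_cfDen_le ha k⟩⟩
  have hDf : ∀ N, ∀ᶠ q in atTop, ∃ k ≥ N, D k ≤ f q := fun N ↦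
    eventually_atTop.mpr ⟨(cfDen a (N + 1)).toNat, fun q hq ↦ by
      obtain ⟨k, hkN, hkq, hqk⟩ := exists_cfDen_le_lt ha N (q := q) (by omega)
      exact ⟨k, hkN, inv_lambdaCF_le_scaledDist ha hkq hqk⟩⟩
  have hf_cobdd : IsCoboundedUnder (· ≥ ·) atTop f :=
    IsCoboundedUnder.of_frequently_le (a := 1) <| frequently_atTop.mpr fun N ↦
      let ⟨_, q, hq, hle⟩ := (hfD N).exists; ⟨q, hq, hle.trans (hD_le _)⟩
  have hliminf : liminf f atTop = liminf D atTop :=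
    le_antisymm
      (liminf_le_liminf_of_forall_exists (isBoundedUnder_of ⟨0, scaledDist_nonneg _⟩)
        (isCoboundedUnder_ge_of_le atTop hD_le) hfD)
      (liminf_le_liminf_of_forall_exists
        (isBoundedUnder_of ⟨_, fun k ↦ inv_anti₀ (by linarith [hlam k]) (hlam' k)⟩)
        hf_cobdd hDf)
  rw [lagrangeConst_eq_inv_liminf, hliminf,
    liminf_inv_eq_inv_limsup one_pos hlam (isBoundedUnder_of ⟨_, hlam'⟩), limsup_nat_add, inv_inv]

end LagrangeConstant

theorem limsup_lambdaCF_le_limsup_add {a a' : ℕ → ℤ} (ha : ∀ k, 1 ≤ a (k + 1))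
    (ha' : ∀ k, 1 ≤ a' (k + 1)) {B : ℤ} (haB : ∀ k, a (k + 1) ≤ B) {n : ℕ}
    (hwin : ∀ᶠ t' in atTop, ∃ᶠ t in atTop, ∀ j ≤ 2 * n, a' (t' + 1 + j) = a (t + 1 + j)) :
    limsup (lambdaCF a') atTop ≤ limsup (lambdaCF a) atTop + 2 * (1 / 2) ^ n := by
  rw [← limsup_nat_add (lambdaCF a') (n + 1), ← limsup_nat_add (lambdaCF a) (n + 1)]
  refine limsup_le_limsup_add_of_eventually_frequently
    (isBoundedUnder_of ⟨_, fun i ↦ lambdaCF_le ha haB (i := i + (n + 1)) (by omega)⟩)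
    (isCoboundedUnder_le_of_le atTop fun i ↦ one_le_lambdaCF ha' (i := i + (n + 1)) (by omega))
    (hwin.mono fun t' ht' ↦ ht'.mono fun t ht ↦ ?_)
  have h := abs_lambdaCF_sub_le ha ha' ht
  rw [← add_assoc, ← add_assoc]
  linarith [(abs_le.mp h).2]

def prependZero (c : ℕ → ℤ) (k : ℕ) : ℤ := if k = 0 then 0 else c (k - 1)

@[simp] lemma prependZero_succ (c : ℕ → ℤ) (k : ℕ) : prependZero c (k + 1) = c k := by
  simp [prependZero]

lemma cfZero_eq_cfVal_prependZero (c : ℕ → ℤ) : cfZero c = cfVal (prependZero c) := rfl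

/-- If every block of length `2n+1` occurring infinitely often in the partial quotients of
`γ'` also occurs infinitely often in those of `γ` (all partial quotients at most `4`),
then `μ(γ') < μ(γ) + 2·2^{-(n-1)}`. -/
theorem stmt13 (n : ℕ) (c c' : ℕ → ℤ)
    (hc : ∀ k, 1 ≤ c k ∧ c k ≤ 4) (hc' : ∀ k, 1 ≤ c' k ∧ c' k ≤ 4)
    (hblocks : ∀ k : ℕ,
      (∃ᶠ m in atTop, ∀ j, j < 2 * n + 1 → c' (m + j) = c' (k + j)) →
      (∃ᶠ m in atTop, ∀ j, j < 2 * n + 1 → c (m + j) = c' (k + j))) :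
    lagrangeConst (cfZero c') < lagrangeConst (cfZero c) + 2 * (2 : ℝ) ^ (-((n : ℤ) - 1)) := by
  have hc₁ : ∀ k, 1 ≤ prependZero c (k + 1) := fun k ↦ by simp [(hc k).1]
  have hc₁' : ∀ k, 1 ≤ prependZero c' (k + 1) := fun k ↦ by simp [(hc' k).1]
  have hc₄ : ∀ k, prependZero c (k + 1) ≤ 4 := fun k ↦ by simp [(hc k).2]
  have hc₄' : ∀ k, prependZero c' (k + 1) ≤ 4 := fun k ↦ by simp [(hc' k).2]
  have hfin : (Set.range c').Finite :=
    (Set.finite_Icc 1 4).subset (by rintro _ ⟨k, rfl⟩; exact hc' k)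
  have hwin : ∀ᶠ t' in atTop, ∃ᶠ t in atTop,
      ∀ j ≤ 2 * n, prependZero c' (t' + 1 + j) = prependZero c (t + 1 + j) :=
    (eventually_frequently_block_eq hfin (2 * n + 1)).mono fun k hk ↦
      (hblocks k hk).mono fun m hm j hj ↦ by
        simpa [Nat.add_right_comm _ 1] using (hm j (by omega)).symm
  have hle := limsup_lambdaCF_le_limsup_add hc₁ hc₁' hc₄ hwin
  have hε : (2 : ℝ) ^ (-((n : ℤ) - 1)) = 2 * (1 / 2) ^ n := by
    rw [neg_sub, zpow_sub₀ two_ne_zero, zpow_one, zpow_natCast, one_div, inv_pow]; ring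
  rw [cfZero_eq_cfVal_prependZero, cfZero_eq_cfVal_prependZero, lagrangeConst_cfVal hc₁' hc₄',
    lagrangeConst_cfVal hc₁ hc₄, hε]
  linarith [pow_pos (one_half_pos (α := ℝ)) n]
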